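/- For each fixed b and fixed nonnegative weights w_i, the monotone weighted estimating function S_φ(β, b) = n⁻¹ Σ_{i,j} η_{2i}η_{1j} w_i (X_i − X_j)·1{v_i(β) ≤ u_j(β)} is componentwise monotone in β: for each coordinate k, if β and β̃ agree in all coordinates except β̃_k ≥ β_k, then the k-th component satisfies S_φ,k(β̃, b) ≥ S_φ,k(β, b). -/
import Mathlib


open scoped Classical
open Finset

/-- For fixed nonnegative weights `w_i` (computed from a fixed `b`), the
monotone weighted estimating function
`S_φ(β,b) = n⁻¹ Σ_{i,j} η_{2i}η_{1j} w_i (X_i − X_j)·1{v_i(β) ≤ u_j(β)}`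
is componentwise monotone in `β`: increasing the `k`-th coordinate of `β`
(keeping the others fixed) does not decrease the `k`-th component. -/
theorem stmt_11 (n p : ℕ) (η1 η2 w : Fin n → ℝ) (c d : Fin n → ℝ)
    (X : Fin n → Fin p → ℝ)
    (hη1 : ∀ j, η1 j = 0 ∨ η1 j = 1) (hη2 : ∀ i, η2 i = 0 ∨ η2 i = 1)
    (hw : ∀ i, 0 ≤ w i)
    (k : Fin p) (β β' : Fin p → ℝ)
    (hagree : ∀ l : Fin p, l ≠ k → β' l = β l) (hk : β k ≤ β' k) :
    (n : ℝ)⁻¹ * ∑ i, ∑ j, η2 i * η1 j * w i * (X i k - X j k) *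
        (if c i - ∑ r, β r * X i r ≤ d j - ∑ r, β r * X j r then (1:ℝ) else 0)
      ≤ (n : ℝ)⁻¹ * ∑ i, ∑ j, η2 i * η1 j * w i * (X i k - X j k) *
        (if c i - ∑ r, β' r * X i r ≤ d j - ∑ r, β' r * X j r then (1:ℝ) else 0) := by
  have ht : 0 ≤ β' k - β k := by linarith
  have hsum : ∀ m : Fin n, ∑ r, β' r * X m r
      = (∑ r, β r * X m r) + (β' k - β k) * X m k := by
    intro m
    have h1 : ∑ r, (β' r - β r) * X m r = (β' k - β k) * X m k := by
      rw [Finset.sum_eq_single k]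
      · intro b _ hb; rw [hagree b hb]; ring
      · intro h; exact absurd (Finset.mem_univ k) h
    have h2 : ∑ r, (β' r - β r) * X m r
        = (∑ r, β' r * X m r) - ∑ r, β r * X m r := by
      rw [← Finset.sum_sub_distrib]
      apply Finset.sum_congr rfl
      intro r _; ring
    linarith [h1, h2.symm.trans h1]
  apply mul_le_mul_of_nonneg_left _ (by positivity)
  apply Finset.sum_le_sum; intro i _
  apply Finset.sum_le_sum; intro j _
  have hη1' : 0 ≤ η1 j := by rcases hη1 j with h | h <;> rw [h] <;> norm_num
  have hη2' : 0 ≤ η2 i := by rcases hη2 i with h | h <;> rw [h] <;> norm_num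
  have hA : 0 ≤ η2 i * η1 j * w i := mul_nonneg (mul_nonneg hη2' hη1') (hw i)
  rw [hsum i, hsum j]
  set a := c i - ∑ r, β r * X i r with ha
  set b := d j - ∑ r, β r * X j r with hb
  set t := β' k - β k with htdef
  have hgoalform :
      (c i - ((∑ r, β r * X i r) + t * X i k) ≤ d j - ((∑ r, β r * X j r) + t * X j k))
      ↔ (a - t * X i k ≤ b - t * X j k) := by
    constructor <;> intro h <;> [linarith; linarith]
  rw [if_congr hgoalform rfl rfl]
  rcases le_or_gt 0 (X i k - X j k) with hD | hD
  · have hite : (if a ≤ b then (1:ℝ) else 0) ≤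
        (if a - t * X i k ≤ b - t * X j k then (1:ℝ) else 0) := by
      split_ifs with h1 h2
      · exact le_rfl
      · exact absurd (by nlinarith [mul_nonneg ht hD]) h2
      · norm_num
      · exact le_rfl
    exact mul_le_mul_of_nonneg_left hite (mul_nonneg hA hD)
  · have hite : (if a - t * X i k ≤ b - t * X j k then (1:ℝ) else 0) ≤
        (if a ≤ b then (1:ℝ) else 0) := by
      split_ifs with h1 h2
      · exact le_rfl
      · exact absurd (by nlinarith [mul_nonpos_of_nonneg_of_nonpos ht hD.le]) h2
      · norm_num
      · exact le_rfl
    exact mul_le_mul_of_nonpos_left hite (by nlinarith)
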